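/- The linear automorphism T_τ(x,y,z) = (x, τy, z) acts on the parameter t of the Lins Neto family as t ↦ τ²·t: there exists a nonzero constant c ∈ ℂ such that for every t ∈ ℂ one has T_τ^*(Ω + t·Ξ) = c·(Ω + τ²·t·Ξ), as an equality of the three coefficient polynomials; equivalently T_τ^*Ω = c·Ω and T_τ^*Ξ = c·τ²·Ξ. Consequently the foliations ℱ_t, ℱ_{τt}, ℱ_{τ²t} are projectively equivalent for every t. -/
import Mathlib


open MvPolynomial

noncomputable section

/-- τ = e^{2πi/3}, a primitive cube root of unity. -/
def τ : ℂ := Complex.exp (2 * Real.pi * Complex.I / 3)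

/-- The polynomial ring ℂ[x,y,z]. -/
abbrev R3 : Type := MvPolynomial (Fin 3) ℂ

def Xv : R3 := X 0
def Yv : R3 := X 1
def Zv : R3 := X 2

/-- The 1-form Ω (coefficients of dx, dy, dz). -/
def Om : Fin 3 → R3 :=
  ![Zv * (Yv - Zv) * (Zv ^ 2 + Yv ^ 2 + Yv * Zv) * Yv,
    -(Zv * (Xv - Zv) * (Xv ^ 2 + Zv * Xv + Zv ^ 2) * Xv),
    Xv * Yv * (Xv - Yv) * (Xv ^ 2 + Xv * Yv + Yv ^ 2)]

/-- The 1-form Ξ (coefficients of dx, dy, dz). -/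
def Xi : Fin 3 → R3 :=
  ![-((Yv - Zv) * (Zv ^ 2 + Yv ^ 2 + Yv * Zv) * Xv ^ 2),
    (Xv - Zv) * (Xv ^ 2 + Zv * Xv + Zv ^ 2) * Yv ^ 2,
    -(Zv ^ 2 * (Xv - Yv) * (Xv ^ 2 + Xv * Yv + Yv ^ 2))]

/-- Pullback of the 1-form ω by the polynomial map Q:
`Q^*ω := (A∘Q) dQ₁ + (B∘Q) dQ₂ + (C∘Q) dQ₃`. -/
def pullback (Q ω : Fin 3 → R3) : Fin 3 → R3 :=
  fun i => ∑ j, aeval Q (ω j) * pderiv i (Q j)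

def Tτ : Fin 3 → R3 := ![Xv, C τ * Yv, Zv]


lemma tau_cube : τ ^ 3 = 1 := by
  rw [τ, ← Complex.exp_nat_mul]
  rw [show ((3 : ℕ) : ℂ) * (2 * Real.pi * Complex.I / 3) = 2 * Real.pi * Complex.I by
    push_cast; ring]
  exact Complex.exp_two_pi_mul_I

lemma tau_ne_zero : τ ≠ 0 := Complex.exp_ne_zero _

theorem stmt_17 : ∃ c : ℂ, c ≠ 0 ∧ ∀ t : ℂ,
    pullback Tτ (fun i => Om i + C t * Xi i) =
      fun i => C c * (Om i + C (τ ^ 2 * t) * Xi i) := by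
  have h3 : (C τ : R3) ^ 3 = 1 := by
    rw [← map_pow, tau_cube, map_one]
  refine ⟨τ, tau_ne_zero, fun t => funext fun i => ?_⟩
  fin_cases i <;>
    simp [pullback, Tτ, Om, Xi, Xv, Yv, Zv, Fin.sum_univ_three,
      pderiv_X, Pi.single_apply, smul_eq_mul, Fin.ext_iff, algebraMap_eq]
  ·     linear_combination (C τ * X 2 * X 1 ^ 4 - C t * X 0 ^ 2 * X 2 ^ 3) * h3
  ·     ring
  ·     linear_combination (C t * X 0 ^ 3 * X 2 ^ 2 - C τ * X 0 * X 1 ^ 4) * h3
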